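/- Let Λ be a free abelian group of finite rank with the topology on Pos(Λ) generated as follows: a set is open iff each of its points X admits a finite E ⊆ Λ with X ∩ E = ∅ and {Y positive : Y ∩ E = ∅} contained in the set. Let E be a finite subset of Λ with U(E) = {X ∈ Pos(Λ) : X ∩ E = ∅} nonempty. Then the closure of U(E) in Pos(Λ) equals Pos(Λ) \ (⋃_{λ ∈ E} U({−λ})), i.e. it is the set of positive X such that −λ ∈ X for all λ ∈ E. -/

import Mathlib

open Pointwise

def IsPositiveSubset {Λ : Type*} [AddCommGroup Λ] (X : Set Λ) : Prop :=
  X ∪ (-X) = Set.univ ∧ X + X ⊆ X ∧ ∃ H : AddSubgroup Λ, (H : Set Λ) = X ∩ (-X)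

/-!
Take `Z ∈ U(E)` and a positive `X` containing `-E`. Refining `X` lexicographically by `Z`, i.e.
keeping `a ∈ X` unless `-a ∈ X` too and `a ∉ Z`, gives a positive `Y ⊆ X`, so `Y` lies in every
basic neighbourhood `U(F)` of `X`; and `Y` misses `E`, since `l ∈ E` has `-l ∈ X` and `l ∉ Z`.
Conversely, the set of positive `X` containing `-E` is closed, its complement being
`⋃ l ∈ E, U({-l})`, and it contains `U(E)` because `X ∪ -X = Λ`.
-/

open Topology

section

variable {Λ : Type*} [AddCommGroup Λ]

namespace IsPositiveSubset

variable {X : Set Λ}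

theorem mem_or_neg_mem (hX : IsPositiveSubset X) (a : Λ) : a ∈ X ∨ -a ∈ X := by
  simpa only [Set.mem_union, Set.mem_neg] using Set.eq_univ_iff_forall.1 hX.1 a

theorem neg_mem_of_notMem (hX : IsPositiveSubset X) {a : Λ} (ha : a ∉ X) : -a ∈ X :=
  (hX.mem_or_neg_mem a).resolve_left ha

theorem add_mem (hX : IsPositiveSubset X) {a b : Λ} (ha : a ∈ X) (hb : b ∈ X) : a + b ∈ X :=
  hX.2.1 (Set.add_mem_add ha hb)

theorem of_total_of_add_mem (htot : ∀ a, a ∈ X ∨ -a ∈ X)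
    (hadd : ∀ a ∈ X, ∀ b ∈ X, a + b ∈ X) : IsPositiveSubset X := by
  have hzero : (0 : Λ) ∈ X := by simpa using htot 0
  refine ⟨Set.eq_univ_of_forall fun a => by simpa using htot a, ?_, ?_⟩
  · rintro _ ⟨a, ha, b, hb, rfl⟩
    exact hadd a ha b hb
  · refine ⟨
      { carrier := X ∩ -X
        add_mem' := ?_
        zero_mem' := ⟨hzero, by simpa⟩
        neg_mem' := ?_ }, rfl⟩
    · rintro a b ⟨ha, ha'⟩ ⟨hb, hb'⟩
      refine ⟨hadd a ha b hb, ?_⟩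
      simpa [add_comm] using hadd _ ha' _ hb'
    · rintro a ⟨ha, ha'⟩
      exact ⟨ha', by simpa using ha⟩

end IsPositiveSubset

/-- The lexicographic refinement of `X` by `Z`: it agrees with `X` off `X ∩ -X`, and with `Z`
on `X ∩ -X`. -/
def lexRefine (X Z : Set Λ) : Set Λ := {a | a ∈ X ∧ (-a ∈ X → a ∈ Z)}

theorem lexRefine_subset (X Z : Set Λ) : lexRefine X Z ⊆ X := fun _ ha => ha.1

theorem IsPositiveSubset.lexRefine {X Z : Set Λ} (hX : IsPositiveSubset X)
    (hZ : IsPositiveSubset Z) : IsPositiveSubset (lexRefine X Z) := by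
  refine .of_total_of_add_mem (fun a => ?_) fun a ha b hb => ⟨hX.add_mem ha.1 hb.1, ?_⟩
  · by_cases haX : a ∈ X
    · by_cases hnaX : -a ∈ X
      · rcases hZ.mem_or_neg_mem a with haZ | hnaZ
        · exact .inl ⟨haX, fun _ => haZ⟩
        · exact .inr ⟨hnaX, fun _ => hnaZ⟩
      · exact .inl ⟨haX, fun h => absurd h hnaX⟩
    · exact .inr ⟨hX.neg_mem_of_notMem haX, fun h => absurd (neg_neg a ▸ h) haX⟩
  · intro hnab
    have hna : -a ∈ X := by simpa using hX.add_mem hnab hb.1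
    have hnb : -b ∈ X := by simpa using hX.add_mem hnab ha.1
    exact hZ.add_mem (ha.2 hna) (hb.2 hnb)

theorem lexRefine_inter_eq_empty {X Z E : Set Λ} (hXE : ∀ l ∈ E, -l ∈ X) (hZE : Z ∩ E = ∅) :
    lexRefine X Z ∩ E = ∅ :=
  Set.eq_empty_of_forall_notMem fun l ⟨hl, hlE⟩ =>
    Set.eq_empty_iff_forall_notMem.1 hZE l ⟨hl.2 (hXE l hlE), hlE⟩

variable (Λ) in
abbrev PosSubsets : Type _ := {X : Set Λ // IsPositiveSubset X}

/-- The basic open set `U(E)`. -/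
def avoiding (E : Set Λ) : Set (PosSubsets Λ) := {X | (X : Set Λ) ∩ E = ∅}

theorem avoiding_subset_setOf_neg_mem (E : Set Λ) :
    avoiding E ⊆ {X : PosSubsets Λ | ∀ l ∈ E, -l ∈ (X : Set Λ)} := fun X hX l hl =>
  X.2.neg_mem_of_notMem fun hlX => Set.eq_empty_iff_forall_notMem.1 hX l ⟨hlX, hl⟩

theorem setOf_neg_mem_compl (E : Set Λ) :
    {X : PosSubsets Λ | ∀ l ∈ E, -l ∈ (X : Set Λ)}ᶜ = ⋃ l ∈ E, avoiding {-l} := by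
  ext X
  simp [avoiding, Set.inter_singleton_eq_empty]

section Topology

variable {t : TopologicalSpace (PosSubsets Λ)}
  (ht : ∀ O, IsOpen[t] O ↔ ∀ X ∈ O, ∃ E : Finset Λ, X ∈ avoiding (E : Set Λ) ∧
    avoiding (E : Set Λ) ⊆ O)
include ht

theorem isOpen_avoiding (F : Finset Λ) : IsOpen[t] (avoiding (F : Set Λ)) :=
  (ht _).2 fun _ hX => ⟨F, hX, subset_rfl⟩

theorem isClosed_setOf_neg_mem (E : Set Λ) :
    IsClosed[t] {X : PosSubsets Λ | ∀ l ∈ E, -l ∈ (X : Set Λ)} := by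
  rw [← isOpen_compl_iff, setOf_neg_mem_compl]
  exact isOpen_biUnion fun l _ => by simpa using isOpen_avoiding ht {-l}

theorem setOf_neg_mem_subset_closure_avoiding {E : Set Λ} (hE : (avoiding E).Nonempty) :
    {X : PosSubsets Λ | ∀ l ∈ E, -l ∈ (X : Set Λ)} ⊆ closure[t] (avoiding E) := by
  obtain ⟨Z, hZE⟩ := hE
  intro X hXE
  rw [@mem_closure_iff _ t]
  intro O hO hXO
  obtain ⟨F, hXF, hFO⟩ := (ht O).1 hO X hXO
  refine ⟨⟨lexRefine X Z, X.2.lexRefine Z.2⟩, hFO ?_, lexRefine_inter_eq_empty hXE hZE⟩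
  exact Set.subset_eq_empty (Set.inter_subset_inter_left _ (lexRefine_subset _ _)) hXF

theorem closure_avoiding {E : Set Λ} (hE : (avoiding E).Nonempty) :
    closure[t] (avoiding E) = {X : PosSubsets Λ | ∀ l ∈ E, -l ∈ (X : Set Λ)} :=
  subset_antisymm
    (@closure_minimal _ t _ _ (avoiding_subset_setOf_neg_mem _) (isClosed_setOf_neg_mem ht E))
    (setOf_neg_mem_subset_closure_avoiding ht hE)

end Topology

end

theorem closure_of_uce_general {Λ : Type*} [AddCommGroup Λ]
    (t : TopologicalSpace {X : Set Λ // IsPositiveSubset X})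
    (ht : ∀ O : Set {X : Set Λ // IsPositiveSubset X},
      @IsOpen _ t O ↔ ∀ X ∈ O, ∃ E : Finset Λ,
        ((X : Set Λ) ∩ (E : Set Λ) = ∅) ∧
        {Y : {X : Set Λ // IsPositiveSubset X} | (Y : Set Λ) ∩ (E : Set Λ) = ∅} ⊆ O)
    (E : Finset Λ)
    (hE : {X : {X : Set Λ // IsPositiveSubset X} | (X : Set Λ) ∩ (E : Set Λ) = ∅} ≠ ∅) :
    @closure _ t {X : {X : Set Λ // IsPositiveSubset X} | (X : Set Λ) ∩ (E : Set Λ) = ∅} =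
      {X : {X : Set Λ // IsPositiveSubset X} | ∀ l ∈ E, -l ∈ (X : Set Λ)} :=
  closure_avoiding ht (Set.nonempty_iff_ne_empty.2 hE)

theorem closure_of_uce {Λ : Type*} [AddCommGroup Λ]
    [Module.Free ℤ Λ] [Module.Finite ℤ Λ]
    (t : TopologicalSpace {X : Set Λ // IsPositiveSubset X})
    (ht : ∀ O : Set {X : Set Λ // IsPositiveSubset X},
      @IsOpen _ t O ↔ ∀ X ∈ O, ∃ E : Finset Λ,
        ((X : Set Λ) ∩ (E : Set Λ) = ∅) ∧
        {Y : {X : Set Λ // IsPositiveSubset X} | (Y : Set Λ) ∩ (E : Set Λ) = ∅} ⊆ O)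
    (E : Finset Λ)
    (hE : {X : {X : Set Λ // IsPositiveSubset X} | (X : Set Λ) ∩ (E : Set Λ) = ∅} ≠ ∅) :
    @closure _ t {X : {X : Set Λ // IsPositiveSubset X} | (X : Set Λ) ∩ (E : Set Λ) = ∅} =
      {X : {X : Set Λ // IsPositiveSubset X} | ∀ l ∈ E, -l ∈ (X : Set Λ)} :=
  closure_of_uce_general t ht E hE
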